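/- arXiv:1207.2629 — 3 statements merged into one kernel-verified Lean document; each statement's English description precedes it below -/
import Mathlib

section
/- Let k be a field and let p, g, h ∈ k[x] be polynomials such that h − g has degree at least 1. Let n be a natural number with n > deg p, n > deg g, and n > deg h, and let a = α·xⁿ, b = β·xⁿ with α, β ∈ k nonzero. Then for all t₀, t₁, y ∈ k with t₀ + t₁ = 1 and t₀·t₁ ≠ 0, setting s = t₀·t₁ and w = C y + p + (C s)·b, the polynomial f = (C t₁ − (C s)·a)·(C t₀ + (C s)·a + g·w) + (C t₀ + (C s)·a)·(C t₁ − (C s)·a + h·w) ∈ k[x] has degree exactly 2n + deg(h − g) and leading coefficient s²·α·β·lc(h − g); in particular f is nonzero, and the set {x ∈ k : f(x) = 0} is finite. -/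
/-!
The pulled-back equation rearranges to
`2(t₀ + s a)(t₁ − s a) + w (t₁ g + t₀ h) + s a w (h − g)`, where `w = y + p + s b`.
Since `p, g, h` have degree below `n = deg a = deg b`, the only term of degree
`2n + deg(h − g)` is `s² a b (h − g)`; as `deg(h − g) ≥ 1`, the first summand, of degree `2n`,
lies below it too.
-/

open Polynomial

section

variable {R : Type*} [CommRing R]

-- `c` is the value of the coordinate `y`.
noncomputable def lowerTerms (t₀ t₁ s c : R) (p g h a b : R[X]) : R[X] :=
  2 * (C t₀ + C s * a) * (C t₁ - C s * a) + (C c + p + C s * b) * (C t₁ * g + C t₀ * h) +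
    (C c + p) * (C s * a * (h - g))

theorem pullback_eq_leadingTerm_add_lowerTerms (t₀ t₁ s c α β : R) (p g h : R[X]) (n : ℕ) :
    (C t₁ - C s * (C α * X ^ n)) *
        (C t₀ + C s * (C α * X ^ n) + g * (C c + p + C s * (C β * X ^ n))) +
      (C t₀ + C s * (C α * X ^ n)) *
        (C t₁ - C s * (C α * X ^ n) + h * (C c + p + C s * (C β * X ^ n))) =
      C (s ^ 2 * α * β) * X ^ (2 * n) * (h - g) +
        lowerTerms t₀ t₁ s c p g h (C α * X ^ n) (C β * X ^ n) := by
  simp only [lowerTerms, map_mul, map_pow]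
  ring

theorem natDegree_lowerTerms_lt {n : ℕ} (t₀ t₁ s c : R) {p g h a b : R[X]}
    (hgh : 1 ≤ (h - g).natDegree) (hp : p.natDegree < n) (hg : g.natDegree < n)
    (hh : h.natDegree < n) (ha : a.natDegree ≤ n) (hb : b.natDegree ≤ n) :
    (lowerTerms t₀ t₁ s c p g h a b).natDegree < 2 * n + (h - g).natDegree := by
  unfold lowerTerms
  generalize h - g = d at *
  apply Nat.lt_of_le_sub_one (by omega)
  compute_degree
  all_goals omega

end

theorem natDegree_C_mul_X_pow_mul {R : Type*} [Semiring R] [NoZeroDivisors R] {c : R}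
    (hc : c ≠ 0) {d : R[X]} (hd : d ≠ 0) (k : ℕ) :
    (C c * X ^ k * d).natDegree = k + d.natDegree := by
  have : Nontrivial R := nontrivial_of_ne c 0 hc
  rw [natDegree_mul (mul_ne_zero (C_ne_zero.mpr hc) (pow_ne_zero k X_ne_zero)) hd,
    natDegree_C_mul_X_pow k c hc]

/-- The endomorphism `φ₁(t₀,t₁,y,x) = (t₀ + t₀t₁a(x), t₁ − t₀t₁a(x), y + p(x) + t₀t₁b(x), x)`
of `Δ¹ × 𝔸¹_y × 𝔸¹_x` moves the divisor `D¹ = V(t₁(t₀+yg) + t₀(t₁+yh))` to a divisor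
quasi-finite over `(Δ¹ ∖ V(t₀t₁)) × 𝔸¹_y`: the term of largest `x`-degree in the defining
equation of `φ₁⁻¹(D¹)` is `(t₀t₁)²·a·b·lf(h−g)`. -/
theorem stmt_3 {k : Type*} [Field k] (p g h : k[X]) (hgh : 1 ≤ (h - g).degree)
    (n : ℕ) (hnp : p.natDegree < n) (hng : g.natDegree < n) (hnh : h.natDegree < n)
    (α β : k) (hα : α ≠ 0) (hβ : β ≠ 0)
    (a b : k[X]) (ha : a = C α * X ^ n) (hb : b = C β * X ^ n) :
    ∀ t₀ t₁ y : k, t₀ + t₁ = 1 → t₀ * t₁ ≠ 0 →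
      let s := t₀ * t₁
      let w := C y + p + C s * b
      let f := (C t₁ - C s * a) * (C t₀ + C s * a + g * w) +
               (C t₀ + C s * a) * (C t₁ - C s * a + h * w)
      f.natDegree = 2 * n + (h - g).natDegree ∧
      f.leadingCoeff = s ^ 2 * α * β * (h - g).leadingCoeff ∧
      f ≠ 0 ∧ {x : k | f.eval x = 0}.Finite := by
  intro t₀ t₁ y _ hs s w f
  subst ha hb
  have hd : h - g ≠ 0 := by
    rintro hd
    simp [hd] at hgh
  have hm : 1 ≤ (h - g).natDegree := by
    rwa [degree_eq_natDegree hd, Nat.one_le_cast] at hgh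
  have hc : s ^ 2 * α * β ≠ 0 := by positivity
  have hf : f = C (s ^ 2 * α * β) * X ^ (2 * n) * (h - g) +
      lowerTerms t₀ t₁ s y p g h (C α * X ^ n) (C β * X ^ n) :=
    pullback_eq_leadingTerm_add_lowerTerms ..
  have hlt : (lowerTerms t₀ t₁ s y p g h (C α * X ^ n) (C β * X ^ n)).natDegree <
      (C (s ^ 2 * α * β) * X ^ (2 * n) * (h - g)).natDegree := by
    rw [natDegree_C_mul_X_pow_mul hc hd]
    exact natDegree_lowerTerms_lt _ _ _ _ hm hnp hng hnh
      (natDegree_C_mul_X_pow_le α n) (natDegree_C_mul_X_pow_le β n)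
  have hlc : f.leadingCoeff = s ^ 2 * α * β * (h - g).leadingCoeff := by
    rw [hf, leadingCoeff_add_of_degree_lt' (degree_lt_degree hlt)]
    simp
  have hf0 : f ≠ 0 := by
    rw [← leadingCoeff_ne_zero, hlc]
    exact mul_ne_zero hc (leadingCoeff_ne_zero.mpr hd)
  refine ⟨?_, hlc, hf0, finite_setOfPred_isRoot hf0⟩
  rw [hf, natDegree_add_eq_left_of_natDegree_lt hlt, natDegree_C_mul_X_pow_mul hc hd]
end

section
/- Let k be a field and let g, h ∈ k[x] be nonzero polynomials with g ≠ h. Let n be a natural number with n > deg g and n > deg h, and let a = α·xⁿ with α ∈ k nonzero. Then for all t₀, t₁ ∈ k with t₀ + t₁ = 1, the polynomial (C t₁ − (C (t₀·t₁))·a)·g + (C t₀ + (C (t₀·t₁))·a)·h ∈ k[x] is nonzero. -/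
/-!
Clearing the equation `(t₁ − t₀t₁a)g + (t₀ + t₀t₁a)h = 0` gives
`t₁g + t₀h = t₀t₁αXⁿ(g − h)`. At a vertex of `Δ¹` (`t₀t₁ = 0`) the polynomial is `g` or `h`.
Otherwise the right side is a nonzero multiple of `Xⁿ`, while the left side has degree `< n`.
-/

open Polynomial

namespace Polynomial

theorem natDegree_C_mul_add_C_mul_lt {R : Type*} [Semiring R] {p q : R[X]} {n : ℕ} (c d : R)
    (hp : p.natDegree < n) (hq : q.natDegree < n) : (C c * p + C d * q).natDegree < n :=
  (natDegree_add_le _ _).trans_lt <|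
    max_lt ((natDegree_C_mul_le c p).trans_lt hp) ((natDegree_C_mul_le d q).trans_lt hq)

theorem ne_C_mul_X_pow_mul_of_natDegree_lt {R : Type*} [Semiring R] [NoZeroDivisors R]
    {f r : R[X]} {n : ℕ} {c : R} (hf : f.natDegree < n) (hc : c ≠ 0) (hr : r ≠ 0) :
    f ≠ C c * X ^ n * r := by
  have : Nontrivial R := nontrivial_of_ne c 0 hc
  intro hfr
  have hXf : X ^ n ∣ f := ⟨C c * r, by rw [hfr, ← mul_assoc, X_pow_mul]⟩
  have hf0 : f = 0 := eq_zero_of_dvd_of_natDegree_lt hXf (by rwa [natDegree_X_pow])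
  exact mul_ne_zero (mul_ne_zero (C_ne_zero.mpr hc) (pow_ne_zero n X_ne_zero)) hr
    (hfr ▸ hf0)

end Polynomial

/-- The projective extension of the moving endomorphism `φ₁` on `Δ¹ × ℙ¹_Y × 𝔸¹_x`
moves the closure of the divisor `D¹` to a divisor quasi-finite along the locus
`Y₀ = 0` at infinity: the polynomial `(t₁ − t₀t₁a)g + (t₀ + t₀t₁a)h` never vanishes
identically in `x`. -/
theorem stmt_4 {k : Type*} [Field k] (g h : k[X]) (hg : g ≠ 0) (hh : h ≠ 0) (hgh : g ≠ h)
    (n : ℕ) (hng : g.natDegree < n) (hnh : h.natDegree < n)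
    (α : k) (hα : α ≠ 0) (a : k[X]) (ha : a = C α * X ^ n) :
    ∀ t₀ t₁ : k, t₀ + t₁ = 1 →
      (C t₁ - C (t₀ * t₁) * a) * g + (C t₀ + C (t₀ * t₁) * a) * h ≠ 0 := by
  intro t₀ t₁ ht hzero
  rcases eq_or_ne (t₀ * t₁) 0 with hvertex | hinterior
  · rcases mul_eq_zero.mp hvertex with rfl | rfl
    · obtain rfl : t₁ = 1 := by simpa using ht
      exact hg (by simpa using hzero)
    · obtain rfl : t₀ = 1 := by simpa using ht
      exact hh (by simpa using hzero)
  · have hcleared : C t₁ * g + C t₀ * h = C (t₀ * t₁ * α) * X ^ n * (g - h) := by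
      rw [C_mul, mul_assoc (C (t₀ * t₁)) (C α), ← ha]
      linear_combination hzero
    exact ne_C_mul_X_pow_mul_of_natDegree_lt (natDegree_C_mul_add_C_mul_lt t₁ t₀ hng hnh)
      (mul_ne_zero hinterior hα) (sub_ne_zero.mpr hgh) hcleared
end

section
/- Let k be a field and let g, h ∈ k[x] be polynomials with g ≠ h. Let n be a natural number with n > deg g and n > deg h, and let a = α·xⁿ with α ∈ k nonzero. Then for all t, t₀, t₁ ∈ k with t₀ + t₁ = 1 and (1−t)·t₀·t₁ ≠ 0, setting s = (1−t)·t₀·t₁, the polynomial (C t₁ − (C s)·a)·g + (C t₀ + (C s)·a)·h ∈ k[x] has degree exactly n + deg(h − g) and leading coefficient s·α·lc(h − g); in particular it is nonzero. -/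
open Polynomial

/-! Writing `s = (1 - t) t₀ t₁`, the polynomial is `t₁ g + t₀ h + s α xⁿ (h - g)`. The first two
terms have degree `< n`, so the last one, of degree `n + deg (h - g)` and leading coefficient
`s α lc(h - g)`, dominates. -/

section LeadingTerm

variable {R : Type*} [Semiring R] [NoZeroDivisors R] {p q : R[X]} {c : R} {n : ℕ}

theorem natDegree_C_mul_X_pow_mul_s6 (hc : c ≠ 0) (hq : q ≠ 0) :
    (C c * X ^ n * q).natDegree = n + q.natDegree := by
  have hcX : C c * X ^ n ≠ 0 := fun h0 => hc (by simpa using congrArg leadingCoeff h0)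
  rw [natDegree_mul hcX hq, natDegree_C_mul_X_pow n c hc]

theorem natDegree_lt_natDegree_C_mul_X_pow_mul (hp : p.natDegree < n) (hc : c ≠ 0)
    (hq : q ≠ 0) : p.natDegree < (C c * X ^ n * q).natDegree := by
  rw [natDegree_C_mul_X_pow_mul_s6 hc hq]
  exact hp.trans_le (Nat.le_add_right n _)

theorem natDegree_add_C_mul_X_pow_mul (hp : p.natDegree < n) (hc : c ≠ 0) (hq : q ≠ 0) :
    (p + C c * X ^ n * q).natDegree = n + q.natDegree := by
  rw [natDegree_add_eq_right_of_natDegree_lt (natDegree_lt_natDegree_C_mul_X_pow_mul hp hc hq),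
    natDegree_C_mul_X_pow_mul_s6 hc hq]

theorem leadingCoeff_add_C_mul_X_pow_mul (hp : p.natDegree < n) (hc : c ≠ 0) (hq : q ≠ 0) :
    (p + C c * X ^ n * q).leadingCoeff = c * q.leadingCoeff := by
  rw [leadingCoeff_add_of_degree_lt
      (degree_lt_degree (natDegree_lt_natDegree_C_mul_X_pow_mul hp hc hq)),
    leadingCoeff_mul, leadingCoeff_C_mul_X_pow]

end LeadingTerm

/-- Along the hyperplane `Y₀ = 0` at infinity, the defining equation of the homotopy
divisor `𝒟¹` has leading `x`-term `(1−t)t₀t₁·a·lf(h−g)`, so that `𝒟¹` is quasi-finite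
over `(Δ¹ ∖ V(t₀t₁)) × (𝔸¹∖1)_t × ℙ¹`. -/
theorem stmt_6 {k : Type*} [Field k] (g h : k[X]) (hgh : g ≠ h)
    (n : ℕ) (hng : g.natDegree < n) (hnh : h.natDegree < n)
    (α : k) (hα : α ≠ 0) (a : k[X]) (ha : a = C α * X ^ n) :
    ∀ t t₀ t₁ : k, t₀ + t₁ = 1 → (1 - t) * t₀ * t₁ ≠ 0 →
      let s := (1 - t) * t₀ * t₁
      let f := (C t₁ - C s * a) * g + (C t₀ + C s * a) * h
      f.natDegree = n + (h - g).natDegree ∧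
      f.leadingCoeff = s * α * (h - g).leadingCoeff ∧
      f ≠ 0 := by
  intro t t₀ t₁ _ hs s f
  have hsα : s * α ≠ 0 := mul_ne_zero hs hα
  have hhg : h - g ≠ 0 := sub_ne_zero.mpr hgh.symm
  have hf : f = (C t₁ * g + C t₀ * h) + C (s * α) * X ^ n * (h - g) := by
    simp only [f, ha, C_mul]
    ring
  have hlow : (C t₁ * g + C t₀ * h).natDegree < n :=
    (natDegree_add_le _ _).trans_lt <|
      max_lt ((natDegree_C_mul_le _ _).trans_lt hng) ((natDegree_C_mul_le _ _).trans_lt hnh)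
  have hlc : f.leadingCoeff = s * α * (h - g).leadingCoeff := by
    rw [hf, leadingCoeff_add_C_mul_X_pow_mul hlow hsα hhg]
  refine ⟨by rw [hf, natDegree_add_C_mul_X_pow_mul hlow hsα hhg], hlc, fun hf0 => ?_⟩
  rw [hf0, leadingCoeff_zero] at hlc
  exact mul_ne_zero hsα (leadingCoeff_ne_zero.mpr hhg) hlc.symm
end
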